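/- Assume |I_1| ≥ 3 and let the trap configuration satisfy the quadratic recursion with constant c, where |I_1|^{-1} < c < (|I_1| + √(|I_1|² − 8))/(2|I_1|). Then 𝔼(τ) < ∞. -/

import Mathlib

open MeasureTheory ENNReal Set

noncomputable section

/-- A trap configuration: a trap at the origin and infinitely many traps. -/
def IsTrapConfig (ω : ℕ → Bool) : Prop :=
  ω 0 = true ∧ {x : ℕ | ω x = true}.Infinite

/-- The location `x_i` of the `i`-th trap (traps enumerated in increasing order, `x_0 = 0`). -/
def trapLoc (ω : ℕ → Bool) (i : ℕ) : ℕ :=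
  Nat.nth (fun x => ω x = true) i

/-- The length `|I_i| = x_i - x_{i-1}` of the `i`-th interval between traps, for `i ≥ 1`. -/
def gapLen (ω : ℕ → Bool) (i : ℕ) : ℕ :=
  trapLoc ω i - trapLoc ω (i - 1)

/-- The landscape satisfies the quadratic recursion `|I_{j+1}| = c * |I_j|^2` for all `j ≥ 1`. -/
def QuadRec (ω : ℕ → Bool) (c : ℝ) : Prop :=
  ∀ j : ℕ, 1 ≤ j → (gapLen ω (j + 1) : ℝ) = c * (gapLen ω j : ℝ) ^ 2

/-- One-step transition probabilities of the trapped random walk on `ℕ ∪ {*}`,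
where `none` plays the role of the absorbing cemetery state `*`. -/
def transProb (ω : ℕ → Bool) : Option ℕ → Option ℕ → ℝ
  | none, none => 1
  | none, some _ => 0
  | some x, none => if ω x = true then 1 / 3 else 0
  | some x, some y =>
    if x = 0 then (if y = 1 then 2 / 3 else 0)
    else if ω x = true then (if y = x - 1 ∨ y = x + 1 then 1 / 3 else 0)
    else (if y = x - 1 ∨ y = x + 1 then 1 / 2 else 0)

/-- `S` is (a version of) the trapped random walk in the landscape `ω` under the probability
measure `P`: it starts at `0` and is a Markov chain with transition probabilities `transProb ω`. -/
def IsTrappedRW (ω : ℕ → Bool) {Ω : Type*} [MeasurableSpace Ω]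
    (P : Measure Ω) (S : ℕ → Ω → Option ℕ) : Prop :=
  IsProbabilityMeasure P ∧
  (∀ (n : ℕ) (y : Option ℕ), MeasurableSet {a | S n a = y}) ∧
  P {a | S 0 a = some 0} = 1 ∧
  ∀ (n : ℕ) (path : ℕ → Option ℕ) (y : Option ℕ),
    P {a | (∀ i ≤ n, S i a = path i) ∧ S (n + 1) a = y}
      = ENNReal.ofReal (transProb ω (path n) y) * P {a | ∀ i ≤ n, S i a = path i}

/-- The survival time `τ = inf {k : S k = *}`, valued in `ℕ∞`. -/
def survivalTime {Ω : Type*} (S : ℕ → Ω → Option ℕ) (a : Ω) : ℕ∞ :=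
  sInf {t : ℕ∞ | ∃ k : ℕ, (k : ℕ∞) = t ∧ S k a = none}

/-- The expected survival time `𝔼(τ)`, valued in `ℝ≥0∞`. -/
def expSurvival {Ω : Type*} [MeasurableSpace Ω] (P : Measure Ω)
    (S : ℕ → Ω → Option ℕ) : ℝ≥0∞ :=
  ∫⁻ a, ((survivalTime S a : ℕ∞) : ℝ≥0∞) ∂P

/-- Two landscapes are similar in the tail. -/
def SimilarInTail (ω₁ ω₂ : ℕ → Bool) : Prop :=
  ∃ p₁ p₂ : ℕ, ∀ x : ℕ, ω₁ (p₁ + x) = ω₂ (p₂ + x)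

/-- Indicator that a state is a trap site. -/
def trapInd (ω : ℕ → Bool) : Option ℕ → Bool
  | none => false
  | some x => ω x

/-- Number of visits to the trap set at times `1, …, k`. -/
def visitCount {Ω : Type*} (ω : ℕ → Bool) (S : ℕ → Ω → Option ℕ) (a : Ω) (k : ℕ) : ℕ :=
  ((Finset.Icc 1 k).filter fun j => trapInd ω (S j a) = true).card

/-- `N`, the total number of visits to the trap set at times `≥ 1` (before absorption). -/
def numVisits {Ω : Type*} (ω : ℕ → Bool) (S : ℕ → Ω → Option ℕ) (a : Ω) : ℕ∞ :=
  ⨆ k : ℕ, (visitCount ω S a k : ℕ∞)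

/-- The hitting times `𝒯_i`: `𝒯_0 = 0` and `𝒯_i = inf {k ≥ 1 : #visits to D in [1,k] = i}`. -/
def hitTime {Ω : Type*} (ω : ℕ → Bool) (S : ℕ → Ω → Option ℕ) (i : ℕ) (a : Ω) : ℕ∞ :=
  if i = 0 then 0
  else sInf {t : ℕ∞ | ∃ k : ℕ, (k : ℕ∞) = t ∧ 1 ≤ k ∧ visitCount ω S a k = i}

/-- The inter-arrival times `Y_i = 𝒯_i - 𝒯_{i-1}` for `1 ≤ i ≤ N`, and `Y_i = 0` for `i > N`. -/
def interArrival {Ω : Type*} (ω : ℕ → Bool) (S : ℕ → Ω → Option ℕ) (i : ℕ) (a : Ω) : ℕ∞ :=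
  if 1 ≤ i ∧ (i : ℕ∞) ≤ numVisits ω S a
  then hitTime ω S i a - hitTime ω S (i - 1) a else 0

/-- `Y_i` viewed as an `ℝ≥0∞`-valued random variable. -/
def Yfun {Ω : Type*} (ω : ℕ → Bool) (S : ℕ → Ω → Option ℕ) (i : ℕ) (a : Ω) : ℝ≥0∞ :=
  ((interArrival ω S i a : ℕ∞) : ℝ≥0∞)

/-- The embedded walk `ξ_j = S_{𝒯_j}` for `j ≤ N`, and `ξ_j = *` for `j > N`. -/
def embWalk {Ω : Type*} (ω : ℕ → Bool) (S : ℕ → Ω → Option ℕ) (j : ℕ) (a : Ω) : Option ℕ :=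
  if (j : ℕ∞) ≤ numVisits ω S a then S (hitTime ω S j a).toNat a else none

/-- Sign of the increment of the embedded walk (an arbitrary junk value `2` is produced
if one of the two states is the cemetery state). -/
def stepSign : Option ℕ → Option ℕ → ℤ
  | some x, some y => Int.sign ((y : ℤ) - (x : ℤ))
  | _, _ => 2

/-- `κ` belongs to `𝒦`: entries `κ_1, …, κ_{i-1}` lie in `{-1,0,1}` and all partial sums
are nonnegative. -/
def InKappaSet (i : ℕ) (κ : ℕ → ℤ) : Prop :=
  (∀ j : ℕ, 1 ≤ j → j ≤ i - 1 → κ j = -1 ∨ κ j = 0 ∨ κ j = 1) ∧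
  ∀ m : ℕ, 1 ≤ m → m ≤ i - 1 → 0 ≤ ∑ n ∈ Finset.Icc 1 m, κ n

/-- The event `A_κ`: the walk visits at least `i-1` traps and the embedded walk moves
according to `κ` (for `i = 1` this is the whole sample space). -/
def eventA {Ω : Type*} (ω : ℕ → Bool) (S : ℕ → Ω → Option ℕ) (i : ℕ) (κ : ℕ → ℤ) : Set Ω :=
  {a | ((i - 1 : ℕ) : ℕ∞) ≤ numVisits ω S a ∧
    ∀ j : ℕ, 1 ≤ j → j ≤ i - 1 →
      stepSign (embWalk ω S (j - 1) a) (embWalk ω S j a) = κ j}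

/-- The event `A_κ⁺ = A_κ ∩ {S_{𝒯_{i-1}+1} = S_{𝒯_{i-1}} + 1}` (the whole sample space
for `i = 1`). -/
def eventAplus {Ω : Type*} (ω : ℕ → Bool) (S : ℕ → Ω → Option ℕ) (i : ℕ) (κ : ℕ → ℤ) :
    Set Ω :=
  if i = 1 then Set.univ
  else eventA ω S i κ ∩
    {a | ∃ x : ℕ, S (hitTime ω S (i - 1) a).toNat a = some x ∧
      S ((hitTime ω S (i - 1) a).toNat + 1) a = some (x + 1)}

/-- Conditional expectation `𝔼(f | A)` of an `ℝ≥0∞`-valued function given an event `A`. -/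
def condExpOn {Ω : Type*} [MeasurableSpace Ω] (P : Measure Ω) (A : Set Ω)
    (f : Ω → ℝ≥0∞) : ℝ≥0∞ :=
  (∫⁻ a in A, f a ∂P) / P A

/-- Conditional probability `ℙ(A | B)`. -/
def condProb {Ω : Type*} [MeasurableSpace Ω] (P : Measure Ω) (A B : Set Ω) : ℝ≥0∞ :=
  P (A ∩ B) / P B

/-- Crossing times between `b` and `b+1`, shifted by one: `crossTime S b 0 = l_{-1} = 0`,
`crossTime S b (n+1) = l_n` where `l_0 = inf {t : S t = b}` and `l_i` alternately hits
`b+1` and `b`. -/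
def crossTime {Ω : Type*} (S : ℕ → Ω → Option ℕ) (b : ℕ) : ℕ → Ω → ℕ∞
  | 0, _ => 0
  | 1, a => sInf {t : ℕ∞ | ∃ k : ℕ, (k : ℕ∞) = t ∧ S k a = some b}
  | n + 2, a =>
    if crossTime S b (n + 1) a = ⊤ then ⊤
    else
      sInf {t : ℕ∞ | ∃ k : ℕ, (k : ℕ∞) = t ∧ crossTime S b (n + 1) a ≤ (k : ℕ∞) ∧
        S k a = some (if S (crossTime S b (n + 1) a).toNat a = some b then b + 1 else b)}

/-- `T_n = τ ∧ l_n - τ ∧ l_{n-1}` (with the index shift `l_n = crossTime S b (n+1)`). -/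
def crossDur {Ω : Type*} (S : ℕ → Ω → Option ℕ) (b : ℕ) (n : ℕ) (a : Ω) : ℕ∞ :=
  min (survivalTime S a) (crossTime S b (n + 1) a)
    - min (survivalTime S a) (crossTime S b n a)

/-- `ℰ_0 = 𝔼[T_0]`. -/
def cE0 {Ω : Type*} [MeasurableSpace Ω] (P : Measure Ω) (S : ℕ → Ω → Option ℕ)
    (b : ℕ) : ℝ≥0∞ :=
  ∫⁻ a, ((crossDur S b 0 a : ℕ∞) : ℝ≥0∞) ∂P

/-- `𝒫_0 = ℙ(l_0 < ∞)`. -/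
def cP0 {Ω : Type*} [MeasurableSpace Ω] (P : Measure Ω) (S : ℕ → Ω → Option ℕ)
    (b : ℕ) : ℝ≥0∞ :=
  P {a | crossTime S b 1 a ≠ ⊤}

/-- `ℰ₊ = 𝔼[T_2 | l_1 < ∞]`. -/
def cEplus {Ω : Type*} [MeasurableSpace Ω] (P : Measure Ω) (S : ℕ → Ω → Option ℕ)
    (b : ℕ) : ℝ≥0∞ :=
  condExpOn P {a | crossTime S b 2 a ≠ ⊤} (fun a => ((crossDur S b 2 a : ℕ∞) : ℝ≥0∞))

/-- `ℰ₋ = 𝔼[T_3 | l_2 < ∞]`. -/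
def cEminus {Ω : Type*} [MeasurableSpace Ω] (P : Measure Ω) (S : ℕ → Ω → Option ℕ)
    (b : ℕ) : ℝ≥0∞ :=
  condExpOn P {a | crossTime S b 3 a ≠ ⊤} (fun a => ((crossDur S b 3 a : ℕ∞) : ℝ≥0∞))

/-- `𝒫₊ = ℙ(l_2 < ∞ | l_1 < ∞)`. -/
def cPplus {Ω : Type*} [MeasurableSpace Ω] (P : Measure Ω) (S : ℕ → Ω → Option ℕ)
    (b : ℕ) : ℝ≥0∞ :=
  P {a | crossTime S b 3 a ≠ ⊤} / P {a | crossTime S b 2 a ≠ ⊤}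

/-- `𝒫₋ = ℙ(l_3 < ∞ | l_2 < ∞)`. -/
def cPminus {Ω : Type*} [MeasurableSpace Ω] (P : Measure Ω) (S : ℕ → Ω → Option ℕ)
    (b : ℕ) : ℝ≥0∞ :=
  P {a | crossTime S b 4 a ≠ ⊤} / P {a | crossTime S b 3 a ≠ ⊤}

/-- `ω₂` is obtained from `ω₁` by lengthening the `k`-th interval by one site. -/
def IsLengthened (ω₁ ω₂ : ℕ → Bool) (k : ℕ) : Prop :=
  (∀ x : ℕ, x ≤ trapLoc ω₁ (k - 1) → ω₂ x = ω₁ x) ∧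
  ω₂ (trapLoc ω₁ (k - 1) + 1) = false ∧
  ∀ x : ℕ, trapLoc ω₁ (k - 1) + 1 < x → ω₂ x = ω₁ (x - 1)

end

/-!
A Foster–Lyapunov argument. On the interval `[x_j, x_{j+1})` put
`f (x_j + t) = v_j + α |I_{j+1}| t - t²`: a concave parabola with second difference `-2`, so at
non-trap sites `f` decreases by exactly `1` per step in expectation. The levels grow by
`v_j = v_{j-1} + (α - 1) |I_j|²`, and as long as `α |I_{j+1}| ≤ (α - 1) |I_j|²` this makes the
expected decrease at least `1` at the traps as well. For the quadratic recursion with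
`0 < c < 1` and `α = (1 - c)⁻¹ ≥ 1` the last inequality is an equality.
Summing the drift inequality against the laws of `S_n` gives
`𝔼 τ ≤ ∑ₙ ℙ(S_n ≠ *) ≤ f 0 < ∞`.
-/

section FosterLyapunov

variable {β : Type*}

theorem tsum_tsum_mul_le_of_drift {m : ℕ → β → ℝ≥0∞} {K : β → β → ℝ≥0∞} {f g : β → ℝ≥0∞}
    (hm : ∀ n y, m (n + 1) y = ∑' z, m n z * K z y)
    (hf : ∀ z, ∑' y, K z y * f y + g z ≤ f z) :
    ∑' n, ∑' z, m n z * g z ≤ ∑' z, m 0 z * f z := by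
  have step : ∀ n, ∑' y, m (n + 1) y * f y + ∑' z, m n z * g z ≤ ∑' z, m n z * f z := by
    intro n
    calc ∑' y, m (n + 1) y * f y + ∑' z, m n z * g z
        = ∑' z, m n z * (∑' y, K z y * f y + g z) := by
          simp_rw [hm, ← ENNReal.tsum_mul_right, mul_assoc]
          rw [ENNReal.tsum_comm, ← ENNReal.tsum_add]
          simp_rw [ENNReal.tsum_mul_left, mul_add]
      _ ≤ ∑' z, m n z * f z := ENNReal.tsum_le_tsum fun z => mul_le_mul_right (hf z) _
  have partialSum : ∀ n, ∑ k ∈ Finset.range n, ∑' z, m k z * g z + ∑' z, m n z * f z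
      ≤ ∑' z, m 0 z * f z := by
    intro n
    induction n with
    | zero => rw [Finset.sum_range_zero, zero_add]
    | succ n ih =>
      calc ∑ k ∈ Finset.range (n + 1), ∑' z, m k z * g z + ∑' z, m (n + 1) z * f z
          = ∑ k ∈ Finset.range n, ∑' z, m k z * g z
              + (∑' z, m (n + 1) z * f z + ∑' z, m n z * g z) := by
            rw [Finset.sum_range_succ]; ring
        _ ≤ ∑' z, m 0 z * f z := (add_le_add_right (step n) _).trans ih
  rw [ENNReal.tsum_eq_iSup_nat]
  exact iSup_le fun n => le_self_add.trans (partialSum n)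

end FosterLyapunov

section MarkovMarginals

variable {β Ω : Type*} {X : ℕ → Ω → β}

def extendPath {n : ℕ} (v : Fin (n + 1) → β) (i : ℕ) : β :=
  v ⟨min i n, Nat.lt_succ_of_le (min_le_right i n)⟩

lemma extendPath_of_le {n i : ℕ} (v : Fin (n + 1) → β) (hi : i ≤ n) :
    extendPath v i = v ⟨i, Nat.lt_succ_of_le hi⟩ := by
  simp only [extendPath, min_eq_left hi]

def pathCylinder (X : ℕ → Ω → β) (n : ℕ) (v : Fin (n + 1) → β) : Set Ω :=
  {a | ∀ i ≤ n, X i a = extendPath v i}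

lemma pathCylinder_subset (n : ℕ) (v : Fin (n + 1) → β) :
    pathCylinder X n v ⊆ {a | X n a = extendPath v n} :=
  fun _ ha => ha n le_rfl

variable [MeasurableSpace Ω] {P : Measure Ω}

lemma measurableSet_pathCylinder (hX : ∀ n y, MeasurableSet {a | X n a = y}) (n : ℕ)
    (v : Fin (n + 1) → β) : MeasurableSet (pathCylinder X n v) := by
  have : pathCylinder X n v = ⋂ i ∈ Set.Iic n, {a | X i a = extendPath v i} := by
    ext a; simp [pathCylinder]
  rw [this]
  exact MeasurableSet.biInter (Set.to_countable _) fun i _ => hX i _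

lemma measure_eq_tsum_inter_pathCylinder [Countable β]
    (hX : ∀ n y, MeasurableSet {a | X n a = y}) (n : ℕ) {A : Set Ω} (hA : MeasurableSet A) :
    P A = ∑' v, P (A ∩ pathCylinder X n v) := by
  have hcover : ⋃ v, pathCylinder X n v = Set.univ :=
    Set.iUnion_eq_univ_iff.mpr fun a => ⟨fun i => X i a, fun i hi => by rw [extendPath_of_le _ hi]⟩
  have hdisj : Pairwise (Function.onFun Disjoint fun v => A ∩ pathCylinder X n v) := by
    intro v w hvw
    refine Set.disjoint_left.mpr fun a hv hw => hvw (funext fun i => ?_)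
    have := (hv.2 i (Nat.lt_succ_iff.mp i.2)).symm.trans (hw.2 i (Nat.lt_succ_iff.mp i.2))
    simpa [extendPath_of_le _ (Nat.lt_succ_iff.mp i.2)] using this
  conv_lhs => rw [← Set.inter_univ A, ← hcover, Set.inter_iUnion]
  exact measure_iUnion hdisj fun v => hA.inter (measurableSet_pathCylinder hX n v)

theorem measure_succ_eq_tsum [Countable β] {K : β → β → ℝ≥0∞}
    (hX : ∀ n y, MeasurableSet {a | X n a = y})
    (hK : ∀ (n : ℕ) (path : ℕ → β) (y : β),
      P {a | (∀ i ≤ n, X i a = path i) ∧ X (n + 1) a = y}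
        = K (path n) y * P {a | ∀ i ≤ n, X i a = path i})
    (n : ℕ) (y : β) :
    P {a | X (n + 1) a = y} = ∑' z, P {a | X n a = z} * K z y := by
  calc P {a | X (n + 1) a = y}
      = ∑' v, P ({a | X (n + 1) a = y} ∩ pathCylinder X n v) :=
        measure_eq_tsum_inter_pathCylinder hX n (hX (n + 1) y)
    _ = ∑' v, ∑' z, P ({a | X n a = z} ∩ pathCylinder X n v) * K z y := by
        refine tsum_congr fun v => ?_
        rw [tsum_eq_single (extendPath v n), Set.inter_eq_right.mpr (pathCylinder_subset n v),
          Set.inter_comm, mul_comm]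
        · exact hK n (extendPath v) y
        · intro z hz
          rw [Set.disjoint_iff_inter_eq_empty.mp, measure_empty, zero_mul]
          exact Set.disjoint_left.mpr fun a hz' hv =>
            hz (Eq.trans (Eq.symm hz') (pathCylinder_subset n v hv))
    _ = ∑' z, P {a | X n a = z} * K z y := by
        rw [ENNReal.tsum_comm]
        refine tsum_congr fun z => ?_
        rw [ENNReal.tsum_mul_right, ← measure_eq_tsum_inter_pathCylinder hX n (hX n z)]

end MarkovMarginals

lemma comp_eq_tsum_indicator {β Ω : Type*} (X : Ω → β) (g : β → ℝ≥0∞) (a : Ω) :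
    g (X a) = ∑' y, {a | X a = y}.indicator (fun _ => g y) a := by
  rw [tsum_eq_single (X a)]
  · exact (Set.indicator_of_mem rfl _).symm
  · exact fun y hy => Set.indicator_of_notMem (Ne.symm hy) _

lemma lintegral_comp_eq_tsum {β Ω : Type*} [Countable β] [MeasurableSpace Ω] {P : Measure Ω}
    {X : Ω → β} (hX : ∀ y, MeasurableSet {a | X a = y}) (g : β → ℝ≥0∞) :
    ∫⁻ a, g (X a) ∂P = ∑' y, P {a | X a = y} * g y := by
  simp_rw [comp_eq_tsum_indicator X g]
  rw [lintegral_tsum fun y => (measurable_const.indicator (hX y)).aemeasurable]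
  exact tsum_congr fun y => by rw [lintegral_indicator_const (hX y), mul_comm]

def aliveIndicator (z : Option ℕ) : ℝ≥0∞ :=
  z.elim 0 fun _ => 1

lemma survivalTime_le_tsum_aliveIndicator {Ω : Type*} (S : ℕ → Ω → Option ℕ) (a : Ω) :
    ((survivalTime S a : ℕ∞) : ℝ≥0∞) ≤ ∑' k, aliveIndicator (S k a) := by
  have alive : ∀ k : ℕ, (k : ℕ∞) < survivalTime S a → aliveIndicator (S k a) = 1 := by
    intro k hk
    obtain ⟨x, hx⟩ := Option.ne_none_iff_exists'.mp fun hk' => hk.not_ge (sInf_le ⟨k, rfl, hk'⟩)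
    rw [hx]
    rfl
  induction h : survivalTime S a using ENat.recTopCoe with
  | top =>
    rw [ENat.toENNReal_top, tsum_congr fun k => alive k (h ▸ ENat.natCast_lt_top k),
      ENNReal.tsum_const_eq_top_of_ne_zero one_ne_zero]
  | coe m =>
    calc ((m : ℕ∞) : ℝ≥0∞) = ∑ k ∈ Finset.range m, aliveIndicator (S k a) := by
          rw [Finset.sum_congr rfl fun k hk => alive k (h ▸ by simpa using hk)]
          simp
      _ ≤ ∑' k, aliveIndicator (S k a) := ENNReal.sum_le_tsum _

theorem expSurvival_le_of_drift {ω : ℕ → Bool} {Ω : Type*} [MeasurableSpace Ω] {P : Measure Ω}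
    {S : ℕ → Ω → Option ℕ} (hS : IsTrappedRW ω P S) {F : Option ℕ → ℝ≥0∞}
    (hF : ∀ z, ∑' y, ENNReal.ofReal (transProb ω z y) * F y + aliveIndicator z ≤ F z) :
    expSurvival P S ≤ F (some 0) := by
  obtain ⟨hP, hmeas, hstart, hmarkov⟩ := hS
  have hnull : ∀ z ≠ some 0, P {a | S 0 a = z} = 0 := fun z hz =>
    measure_mono_null (fun a ha hmem => hz (ha.symm.trans hmem))
      (prob_compl_eq_zero_iff (hmeas 0 (some 0)) |>.mpr hstart)
  calc expSurvival P S ≤ ∫⁻ a, ∑' k, aliveIndicator (S k a) ∂P :=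
        lintegral_mono fun a => survivalTime_le_tsum_aliveIndicator S a
    _ = ∑' k, ∑' z, P {a | S k a = z} * aliveIndicator z := by
        rw [lintegral_tsum fun k => ?_]
        · exact tsum_congr fun k => lintegral_comp_eq_tsum (hmeas k) _
        · simp_rw [comp_eq_tsum_indicator (S k) aliveIndicator]
          exact (Measurable.tsum fun z => measurable_const.indicator (hmeas k z)).aemeasurable
    _ ≤ ∑' z, P {a | S 0 a = z} * F z :=
        tsum_tsum_mul_le_of_drift (measure_succ_eq_tsum hmeas hmarkov) hF
    _ = F (some 0) := by
        rw [tsum_eq_single (some 0) fun z hz => by rw [hnull z hz, zero_mul], hstart, one_mul]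

/-- The index `j` of the interval between traps containing `x`, i.e. `x_j ≤ x < x_{j+1}`. -/
def trapIndex (ω : ℕ → Bool) (x : ℕ) : ℕ :=
  Nat.count (fun y => ω y = true) (x + 1) - 1

namespace IsTrapConfig

variable {ω : ℕ → Bool} (hω : IsTrapConfig ω)
include hω

lemma trapLoc_zero : trapLoc ω 0 = 0 :=
  Nat.nth_zero_of_zero hω.1

lemma trapLoc_strictMono : StrictMono (trapLoc ω) :=
  Nat.nth_strictMono hω.2

lemma trap_trapLoc (j : ℕ) : ω (trapLoc ω j) = true :=
  Nat.nth_mem_of_infinite hω.2 j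

lemma trapLoc_succ (j : ℕ) : trapLoc ω (j + 1) = trapLoc ω j + gapLen ω (j + 1) := by
  have := hω.trapLoc_strictMono (Nat.lt_add_one j)
  simp only [gapLen, Nat.add_sub_cancel]
  omega

lemma gapLen_pos (j : ℕ) : 0 < gapLen ω (j + 1) := by
  have := hω.trapLoc_strictMono (Nat.lt_add_one j)
  have := hω.trapLoc_succ j
  omega

lemma trapIndex_eq {j x : ℕ} (h₁ : trapLoc ω j ≤ x) (h₂ : x < trapLoc ω (j + 1)) :
    trapIndex ω x = j := by
  have hlt : j < Nat.count (fun y => ω y = true) (x + 1) :=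
    (Nat.lt_nth_iff_count_lt hω.2).mpr (Nat.lt_succ_of_le h₁)
  have hle : Nat.count (fun y => ω y = true) (x + 1) ≤ j + 1 :=
    (Nat.count_le_iff_le_nth hω.2).mpr h₂
  simp only [trapIndex]
  omega

lemma exists_eq_trapLoc_add (x : ℕ) :
    ∃ j t, t < gapLen ω (j + 1) ∧ x = trapLoc ω j + t := by
  have hpos : 1 ≤ Nat.count (fun y => ω y = true) (x + 1) :=
    (Nat.count_monotone _ (Nat.succ_le_succ x.zero_le)).trans' (by simp [Nat.count_succ, hω.1])
  have h₁ : trapLoc ω (trapIndex ω x) < x + 1 :=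
    (Nat.lt_nth_iff_count_lt hω.2).mp (by simp only [trapIndex]; omega)
  have h₂ : x + 1 ≤ trapLoc ω (trapIndex ω x + 1) :=
    (Nat.count_le_iff_le_nth hω.2).mp (by simp only [trapIndex]; omega)
  have := hω.trapLoc_succ (trapIndex ω x)
  exact ⟨trapIndex ω x, x - trapLoc ω (trapIndex ω x), by omega, by omega⟩

lemma eq_trapLoc_of_trap {j t : ℕ} (ht : t < gapLen ω (j + 1)) (hx : ω (trapLoc ω j + t) = true) :
    t = 0 := by
  set i := Nat.count (fun y => ω y = true) (trapLoc ω j + t)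
  have hi : trapLoc ω i = trapLoc ω j + t := Nat.nth_count (p := fun y => ω y = true) hx
  have h₁ : j ≤ i := hω.trapLoc_strictMono.le_iff_le.mp (by omega)
  have h₂ : i < j + 1 := hω.trapLoc_strictMono.lt_iff_lt.mp (by rw [hω.trapLoc_succ]; omega)
  rw [show i = j by omega] at hi
  omega

end IsTrapConfig

-- `v_0` is just large enough for the drift condition at `0` and at the first trap `x_1`.
noncomputable def lyapLevel (ω : ℕ → Bool) (α : ℝ) (j : ℕ) : ℝ :=
  2 * (α + 1) * gapLen ω 1 + 2 + (α - 1) * ∑ m ∈ Finset.Icc 1 j, (gapLen ω m : ℝ) ^ 2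

noncomputable def lyap (ω : ℕ → Bool) (α : ℝ) (x : ℕ) : ℝ :=
  lyapLevel ω α (trapIndex ω x)
    + α * gapLen ω (trapIndex ω x + 1) * ((x : ℝ) - trapLoc ω (trapIndex ω x))
    - ((x : ℝ) - trapLoc ω (trapIndex ω x)) ^ 2

section Lyapunov

variable {ω : ℕ → Bool} {α : ℝ}

lemma transProb_succ_of_ne_zero {x : ℕ} (hx : x ≠ 0) :
    transProb ω (some x) (some (x + 1)) = if ω x = true then 1 / 3 else 1 / 2 := by
  simp [transProb, hx]

lemma lyapLevel_zero : lyapLevel ω α 0 = 2 * (α + 1) * gapLen ω 1 + 2 := by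
  simp [lyapLevel]

lemma lyapLevel_succ (j : ℕ) :
    lyapLevel ω α (j + 1) = lyapLevel ω α j + (α - 1) * (gapLen ω (j + 1) : ℝ) ^ 2 := by
  simp only [lyapLevel]
  rw [Finset.sum_Icc_succ_top (Nat.le_add_left 1 j)]
  ring

lemma two_le_lyapLevel (hα : 1 ≤ α) (j : ℕ) : 2 ≤ lyapLevel ω α j := by
  have := Finset.sum_nonneg fun m (_ : m ∈ Finset.Icc 1 j) => sq_nonneg (gapLen ω m : ℝ)
  simp only [lyapLevel]
  have : (0 : ℝ) ≤ gapLen ω 1 := Nat.cast_nonneg _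
  nlinarith

lemma IsTrapConfig.lyap_trapLoc_add (hω : IsTrapConfig ω) {j t : ℕ} (ht : t ≤ gapLen ω (j + 1)) :
    lyap ω α (trapLoc ω j + t)
      = lyapLevel ω α j + α * gapLen ω (j + 1) * t - (t : ℝ) ^ 2 := by
  have hsucc := hω.trapLoc_succ j
  rcases ht.lt_or_eq with ht | rfl
  · rw [lyap, hω.trapIndex_eq (Nat.le_add_right _ t) (by omega)]
    push_cast
    ring
  · rw [lyap, ← hsucc, hω.trapIndex_eq le_rfl (hω.trapLoc_strictMono (Nat.lt_add_one _)),
      lyapLevel_succ, hsucc]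
    push_cast
    ring

lemma IsTrapConfig.lyap_nonneg (hω : IsTrapConfig ω) (hα : 1 ≤ α) (x : ℕ) : 0 ≤ lyap ω α x := by
  obtain ⟨j, t, ht, rfl⟩ := hω.exists_eq_trapLoc_add x
  rw [hω.lyap_trapLoc_add ht.le]
  have ht₀ : (0 : ℝ) ≤ t := t.cast_nonneg
  have htL : (t : ℝ) ≤ gapLen ω (j + 1) := by exact_mod_cast ht.le
  have := two_le_lyapLevel (ω := ω) hα j
  nlinarith [mul_nonneg ht₀ (sub_nonneg.mpr htL),
    mul_nonneg (sub_nonneg.mpr hα) (mul_nonneg (ht₀.trans htL) ht₀)]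

lemma IsTrapConfig.lyap_drift_zero (hω : IsTrapConfig ω) :
    2 / 3 * lyap ω α 1 + 1 ≤ lyap ω α 0 := by
  have h₁ := hω.lyap_trapLoc_add (α := α) (hω.gapLen_pos 0)
  have h₀ := hω.lyap_trapLoc_add (α := α) (hω.gapLen_pos 0).le (t := 0)
  rw [hω.trapLoc_zero, zero_add] at h₁ h₀
  rw [h₁, h₀, lyapLevel_zero]
  have : (0 : ℝ) ≤ gapLen ω 1 := Nat.cast_nonneg _
  push_cast
  linarith

lemma add_le_lyapLevel (hα : 1 ≤ α)
    (hgrowth : ∀ j, 1 ≤ j → α * gapLen ω (j + 1) ≤ (α - 1) * (gapLen ω j : ℝ) ^ 2)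
    {j : ℕ} (hj : 1 ≤ j) :
    α * gapLen ω (j + 1) + (2 - α) * gapLen ω j + 1 ≤ lyapLevel ω α j := by
  obtain ⟨k, rfl⟩ := Nat.exists_eq_add_of_le' hj
  have hL : (0 : ℝ) ≤ gapLen ω (k + 1) := Nat.cast_nonneg _
  rw [lyapLevel_succ]
  have := hgrowth (k + 1) hj
  rcases Nat.eq_zero_or_pos k with rfl | hk
  · rw [lyapLevel_zero]
    nlinarith
  · obtain ⟨i, rfl⟩ := Nat.exists_eq_add_of_le' hk
    have := hgrowth (i + 1) hk
    have := two_le_lyapLevel (ω := ω) hα i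
    rw [lyapLevel_succ]
    nlinarith

lemma IsTrapConfig.lyap_drift_of_ne_zero (hω : IsTrapConfig ω) (hα : 1 ≤ α)
    (hgrowth : ∀ j, 1 ≤ j → α * gapLen ω (j + 1) ≤ (α - 1) * (gapLen ω j : ℝ) ^ 2)
    {x : ℕ} (hx : x ≠ 0) :
    transProb ω (some x) (some (x + 1)) * (lyap ω α (x - 1) + lyap ω α (x + 1)) + 1
      ≤ lyap ω α x := by
  obtain ⟨j, t, ht, rfl⟩ := hω.exists_eq_trapLoc_add x
  by_cases htrap : ω (trapLoc ω j + t) = true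
  · obtain rfl := hω.eq_trapLoc_of_trap ht htrap
    rw [add_zero] at hx htrap ⊢
    obtain ⟨k, rfl⟩ : ∃ k, j = k + 1 :=
      Nat.exists_eq_add_one.mpr (Nat.pos_of_ne_zero fun h => hx (by simp [h, hω.trapLoc_zero]))
    have hL := hω.gapLen_pos k
    have hprev : trapLoc ω (k + 1) - 1 = trapLoc ω k + (gapLen ω (k + 1) - 1) := by
      rw [hω.trapLoc_succ]; omega
    have hat := hω.lyap_trapLoc_add (α := α) (j := k + 1) (Nat.zero_le _)
    rw [add_zero] at hat
    rw [transProb_succ_of_ne_zero hx, if_pos htrap, hprev, hω.lyap_trapLoc_add (by omega),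
      hω.lyap_trapLoc_add (hω.gapLen_pos (k + 1)), hat, lyapLevel_succ]
    have := add_le_lyapLevel hα hgrowth (Nat.le_add_left 1 k)
    rw [lyapLevel_succ] at this
    push_cast [hL]
    linarith
  · have ht0 : t ≠ 0 := by rintro rfl; exact htrap (by simpa using hω.trap_trapLoc j)
    have hprev : trapLoc ω j + t - 1 = trapLoc ω j + (t - 1) := by omega
    rw [transProb_succ_of_ne_zero hx, if_neg htrap, hprev, hω.lyap_trapLoc_add (by omega),
      add_assoc, hω.lyap_trapLoc_add ht, hω.lyap_trapLoc_add ht.le]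
    push_cast [Nat.one_le_iff_ne_zero.mpr ht0]
    linarith

end Lyapunov

noncomputable def lyapLift (f : ℕ → ℝ) (z : Option ℕ) : ℝ≥0∞ :=
  z.elim 0 fun x => ENNReal.ofReal (f x)

lemma tsum_transProb_mul_lyapLift_add_le {ω : ℕ → Bool} {f : ℕ → ℝ} (hf : ∀ x, 0 ≤ f x)
    (hzero : 2 / 3 * f 1 + 1 ≤ f 0)
    (hpos : ∀ x, x ≠ 0 → transProb ω (some x) (some (x + 1)) * (f (x - 1) + f (x + 1)) + 1 ≤ f x)
    (z : Option ℕ) :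
    ∑' y, ENNReal.ofReal (transProb ω z y) * lyapLift f y + aliveIndicator z ≤ lyapLift f z := by
  rcases z with _ | x
  · simp only [aliveIndicator, lyapLift, Option.elim_none, add_zero, nonpos_iff_eq_zero,
      ENNReal.tsum_eq_zero]
    rintro (_ | y) <;> simp [transProb]
  have hp : ∀ y, 0 ≤ transProb ω (some x) y := by
    intro y; rcases y with _ | y <;> simp only [transProb] <;> split_ifs <;> norm_num
  simp only [aliveIndicator, lyapLift, Option.elim_some]
  rcases eq_or_ne x 0 with rfl | hx
  · rw [tsum_eq_single (some 1)]
    · simp only [Option.elim_some]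
      rw [← ENNReal.ofReal_mul (hp _), ← ENNReal.ofReal_one,
        ← ENNReal.ofReal_add (mul_nonneg (hp _) (hf 1)) zero_le_one]
      refine ENNReal.ofReal_le_ofReal ?_
      simpa [transProb] using hzero
    · rintro (_ | y) hy
      · simp
      · simp [transProb, show y ≠ 1 by simpa using hy]
  · rw [tsum_eq_sum (s := {some (x - 1), some (x + 1)}), Finset.sum_pair (by simp)]
    · have hsymm : transProb ω (some x) (some (x - 1)) = transProb ω (some x) (some (x + 1)) := by
        simp [transProb, hx]
      simp only [Option.elim_some]
      rw [hsymm, ← mul_add, ← ENNReal.ofReal_add (hf _) (hf _), ← ENNReal.ofReal_mul (hp _),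
        ← ENNReal.ofReal_one, ← ENNReal.ofReal_add (mul_nonneg (hp _) (add_nonneg (hf _) (hf _)))
          zero_le_one]
      exact ENNReal.ofReal_le_ofReal (hpos x hx)
    · rintro (_ | y) hy
      · simp
      · simp only [Finset.mem_insert, Finset.mem_singleton, Option.some.injEq, not_or] at hy
        simp [transProb, hx, hy.1, hy.2]

theorem IsTrapConfig.expSurvival_lt_top_of_gapLen_growth {ω : ℕ → Bool} (hω : IsTrapConfig ω)
    {α : ℝ} (hα : 1 ≤ α)
    (hgrowth : ∀ j, 1 ≤ j → α * gapLen ω (j + 1) ≤ (α - 1) * (gapLen ω j : ℝ) ^ 2)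
    {Ω : Type*} [MeasurableSpace Ω] {P : Measure Ω} {S : ℕ → Ω → Option ℕ}
    (hS : IsTrappedRW ω P S) :
    expSurvival P S < ⊤ :=
  (expSurvival_le_of_drift hS <| tsum_transProb_mul_lyapLift_add_le (hω.lyap_nonneg hα)
    hω.lyap_drift_zero fun _ hx => hω.lyap_drift_of_ne_zero hα hgrowth hx).trans_lt
    ENNReal.ofReal_lt_top

lemma QuadRec.gapLen_growth_eq {ω : ℕ → Bool} {c : ℝ} (hrec : QuadRec ω c) (hc : c ≠ 1)
    {j : ℕ} (hj : 1 ≤ j) :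
    (1 - c)⁻¹ * gapLen ω (j + 1) = ((1 - c)⁻¹ - 1) * (gapLen ω j : ℝ) ^ 2 := by
  have : 1 - c ≠ 0 := sub_ne_zero.mpr hc.symm
  rw [hrec j hj]
  field_simp
  ring

theorem expSurvival_lt_top_of_c_lt_root_general
    (ω : ℕ → Bool) (hω : IsTrapConfig ω)
    (c : ℝ) (hrec : QuadRec ω c)
    (hc_low : ((gapLen ω 1 : ℝ))⁻¹ < c)
    (hc_up : c < ((gapLen ω 1 : ℝ) + Real.sqrt ((gapLen ω 1 : ℝ) ^ 2 - 8))
      / (2 * (gapLen ω 1 : ℝ)))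
    {Ω : Type*} [MeasurableSpace Ω] (P : MeasureTheory.Measure Ω)
    (S : ℕ → Ω → Option ℕ) (hS : IsTrappedRW ω P S) :
    expSurvival P S < ⊤ := by
  have hL : (0 : ℝ) < gapLen ω 1 := by exact_mod_cast hω.gapLen_pos 0
  have hroot : ((gapLen ω 1 : ℝ) + Real.sqrt ((gapLen ω 1 : ℝ) ^ 2 - 8))
      / (2 * (gapLen ω 1 : ℝ)) < 1 := by
    rw [div_lt_one (by positivity)]
    linarith [(Real.sqrt_lt' hL).mpr (by linarith : (gapLen ω 1 : ℝ) ^ 2 - 8 < _ ^ 2)]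
  have hc : c < 1 := hc_up.trans hroot
  have hα : 1 ≤ (1 - c)⁻¹ :=
    (one_le_inv₀ (sub_pos.mpr hc)).mpr (by linarith [(inv_pos.mpr hL).trans hc_low])
  exact hω.expSurvival_lt_top_of_gapLen_growth hα
    (fun _ hj => (hrec.gapLen_growth_eq hc.ne hj).le) hS

/-- if `|I_1| ≥ 3` and the quadratic recursion holds with
`|I_1|⁻¹ < c < (|I_1| + √(|I_1|² - 8)) / (2|I_1|)`, then `𝔼(τ) < ∞`. -/
theorem expSurvival_lt_top_of_c_lt_root
    (ω : ℕ → Bool) (hω : IsTrapConfig ω) (hI : 3 ≤ gapLen ω 1)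
    (c : ℝ) (hrec : QuadRec ω c)
    (hc_low : ((gapLen ω 1 : ℝ))⁻¹ < c)
    (hc_up : c < ((gapLen ω 1 : ℝ) + Real.sqrt ((gapLen ω 1 : ℝ) ^ 2 - 8))
      / (2 * (gapLen ω 1 : ℝ)))
    {Ω : Type*} [MeasurableSpace Ω] (P : MeasureTheory.Measure Ω)
    (S : ℕ → Ω → Option ℕ) (hS : IsTrappedRW ω P S) :
    expSurvival P S < ⊤ :=
  expSurvival_lt_top_of_c_lt_root_general ω hω c hrec hc_low hc_up P S hS
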